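/- Let Ṽ be any kernel field for f on U, i.e. a smooth vector field with Df(x)(Ṽ(x)) = det Df(x)·Z(f(x)) for all x ∈ U, for some smooth vector field Z defined on a neighborhood of f(U). Then there exist a smooth function α : U → ℝ and a smooth map Y : U → ℝ^n such that Ṽ(x) = α(x)·V(x) + det Df(x)·Y(x) for all x ∈ U. Consequently, for any two nonvanishing kernel fields V₁, V₂ for f and any smooth function g, the conditions 'V₁^j g and all lower-order derivatives of det Df vanish' used to define the type of f do not depend on the choice of nonvanishing kernel field. -/

import Mathlib

open MeasureTheory Real Set Matrix

noncomputable section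

namespace OIO

/-- Euclidean `d`-space, modeled as `Fin d → ℝ`. -/
abbrev E (d : ℕ) : Type := Fin d → ℝ

/-- Phase space `ℝ^d × ℝ^d`. -/
abbrev F (d : ℕ) : Type := (Fin d → ℝ) × (Fin d → ℝ)

/-- The Euclidean dot product on `Fin n → ℝ`. -/
def dotp {n : ℕ} (v w : Fin n → ℝ) : ℝ := ∑ i, v i * w i

/-- The Euclidean length of a vector in `Fin n → ℝ`. -/
def elen {n : ℕ} (v : Fin n → ℝ) : ℝ := Real.sqrt (dotp v v)

/-- Orthogonal projection of `w` onto the orthogonal complement of `ℝ·a`. -/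
def projPerp {n : ℕ} (a w : Fin n → ℝ) : Fin n → ℝ := w - (dotp w a / dotp a a) • a

/-- The mixed Hessian matrix `Φ_{xz}`, with `(i,j)` entry `∂²Φ/∂x_i∂z_j`. -/
def PhiXZ (d : ℕ) (Φ : F d → ℝ) (p : F d) : Matrix (Fin d) (Fin d) ℝ :=
  fun i j => fderiv ℝ (fun q => fderiv ℝ Φ q (Pi.single i 1, 0)) p (0, Pi.single j 1)

/-- `h(x,z) = det Φ_{xz}(x,z)`. -/
def hdet (d : ℕ) (Φ : F d → ℝ) (p : F d) : ℝ := (PhiXZ d Φ p).det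

/-- The last coordinate index in `Fin d`. -/
def lastIdx (d : ℕ) [NeZero d] : Fin d :=
  ⟨d - 1, Nat.sub_lt (Nat.pos_of_ne_zero (NeZero.ne d)) one_pos⟩

/-- The inclusion `Fin (d-1) → Fin d`. -/
def castIdx (d : ℕ) : Fin (d - 1) → Fin d :=
  fun i => ⟨i.1, lt_of_lt_of_le i.2 (Nat.sub_le d 1)⟩

/-- Build a vector in `ℝ^d` from a vector in `ℝ^{d-1}` and a last coordinate. -/
def padVec (d : ℕ) (v : Fin (d - 1) → ℝ) (t : ℝ) : Fin d → ℝ :=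
  fun i => if h : i.1 < d - 1 then v ⟨i.1, h⟩ else t

/-- The block `Φ_{x'z'}` of the mixed Hessian. -/
def blkM (d : ℕ) (Φ : F d → ℝ) (p : F d) : Matrix (Fin (d - 1)) (Fin (d - 1)) ℝ :=
  (PhiXZ d Φ p).submatrix (castIdx d) (castIdx d)

/-- The direction of the kernel vector field `V_R = ∂_{x_d} - Φ_{x_dz'}Φ^{z'x'}·∂_{x'}`. -/
def VRdir (d : ℕ) [NeZero d] (Φ : F d → ℝ) (p : F d) : E d :=
  padVec d (-(Matrix.vecMul (fun j => PhiXZ d Φ p (lastIdx d) (castIdx d j)) (blkM d Φ p)⁻¹)) 1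

/-- The direction of the kernel vector field `V_L = ∂_{z_d} - Φ_{z_dx'}Φ^{x'z'}·∂_{z'}`. -/
def VLdir (d : ℕ) [NeZero d] (Φ : F d → ℝ) (p : F d) : E d :=
  padVec d (-(Matrix.vecMul (fun i => PhiXZ d Φ p (castIdx d i) (lastIdx d)) ((blkM d Φ p)ᵀ)⁻¹)) 1

/-- `V_R h`. -/
def VRh (d : ℕ) [NeZero d] (Φ : F d → ℝ) (p : F d) : ℝ :=
  fderiv ℝ (hdet d Φ) p (VRdir d Φ p, 0)

/-- `V_L h`. -/
def VLh (d : ℕ) [NeZero d] (Φ : F d → ℝ) (p : F d) : ℝ :=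
  fderiv ℝ (hdet d Φ) p (0, VLdir d Φ p)

/-- `V_R² h`. -/
def VR2h (d : ℕ) [NeZero d] (Φ : F d → ℝ) (p : F d) : ℝ :=
  fderiv ℝ (VRh d Φ) p (VRdir d Φ p, 0)

/-- `V_L² h`. -/
def VL2h (d : ℕ) [NeZero d] (Φ : F d → ℝ) (p : F d) : ℝ :=
  fderiv ℝ (VLh d Φ) p (0, VLdir d Φ p)

/-- The dyadic bump functions: `betaJ β₀ 0 = β₀`, and for `j ≥ 1`,
`betaJ β₀ j s = β₁(2^{1-j} s)` where `β₁(t) = β₀(t/2) - β₀(t)`. -/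
def betaJ (β₀ : ℝ → ℝ) : ℕ → ℝ → ℝ
  | 0 => β₀
  | (j + 1) => fun s => β₀ ((2 : ℝ) ^ (-(j : ℤ)) * s / 2) - β₀ ((2 : ℝ) ^ (-(j : ℤ)) * s)

/-- The localized symbol `σ_{j,k,l}`. -/
def sigJKL (d : ℕ) [NeZero d] (Φ σ : F d → ℝ) (β₀ : ℝ → ℝ) (j k l : ℕ) (p : F d) : ℝ :=
  σ p * betaJ β₀ 1 ((2 : ℝ) ^ (l : ℕ) * hdet d Φ p)
    * betaJ β₀ j ((2 : ℝ) ^ ((l : ℝ) / 2) * VRh d Φ p)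
    * betaJ β₀ k ((2 : ℝ) ^ ((l : ℝ) / 2) * VLh d Φ p)

/-- The localized symbol `σ⁰_{j,k,l}` (with `β₀` in place of `β` in the `h`-localization). -/
def sig0 (d : ℕ) [NeZero d] (Φ σ : F d → ℝ) (β₀ : ℝ → ℝ) (j k l : ℕ) (p : F d) : ℝ :=
  σ p * betaJ β₀ 0 ((2 : ℝ) ^ (l : ℕ) * hdet d Φ p)
    * betaJ β₀ j ((2 : ℝ) ^ ((l : ℝ) / 2) * VRh d Φ p)
    * betaJ β₀ k ((2 : ℝ) ^ ((l : ℝ) / 2) * VLh d Φ p)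

/-- `ℓ₀ = [log₂ √λ]`. -/
def ell0 (lam : ℝ) : ℕ := ⌊Real.logb 2 (Real.sqrt lam)⌋₊

/-- The oscillatory integral operator `T_λ[σ] f (x) = ∫ e^{iλΦ(x,z)} σ(x,z) f(z) dz`. -/
def Top (d : ℕ) (lam : ℝ) (Φ σ : F d → ℝ) (f : E d → ℂ) (x : E d) : ℂ :=
  ∫ z : E d, Complex.exp (Complex.I * lam * Φ (x, z)) * σ (x, z) * f z

/-- The `L² → L²` operator norm of `T_λ[σ]`. -/
def opNorm (d : ℕ) (lam : ℝ) (Φ σ : F d → ℝ) : ℝ :=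
  sInf {C : ℝ | 0 ≤ C ∧ ∀ f : E d → ℂ,
    eLpNorm (Top d lam Φ σ f) 2 volume ≤ ENNReal.ofReal C * eLpNorm f 2 volume}

/-- The `C⁵` norm of `Φ` on a set `K`. -/
def C5norm (d : ℕ) (Φ : F d → ℝ) (K : Set (F d)) : ℝ :=
  ⨆ p ∈ K, ∑ n ∈ Finset.range 6, ‖iteratedFDeriv ℝ n Φ p‖

/-- The box `B_P^{a,b}(γ₁,γ₂,δ₁,δ₂)`. -/
def Box (d : ℕ) (P : F d) (a b : E d) (γ₁ γ₂ δ₁ δ₂ : ℝ) : Set (F d) :=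
  {q | elen (projPerp a (q.1 - P.1)) ≤ γ₁ ∧ |dotp (q.1 - P.1) a| ≤ γ₂ ∧
       elen (projPerp b (q.2 - P.2)) ≤ δ₁ ∧ |dotp (q.2 - P.2) b| ≤ δ₂}

/-- A normalized cutoff function associated to the box `B_P^{a,b}(γ₁,γ₂,δ₁,δ₂)`:
smooth, supported in the box, and with the natural derivative bounds (up to order `10d`
in each group of variables) with respect to directions orthogonal to `a` (resp. `b`),
and the directions `a`, `b` themselves. -/
def IsNormalizedCutoff (d : ℕ) (ζ : F d → ℝ) (P : F d) (a b : E d)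
    (γ₁ γ₂ δ₁ δ₂ : ℝ) : Prop :=
  ContDiff ℝ (⊤ : ℕ∞) ζ ∧ tsupport ζ ⊆ Box d P a b γ₁ γ₂ δ₁ δ₂ ∧
  ∀ (mL nL mR nR : ℕ), mL + nL ≤ 10 * d → mR + nR ≤ 10 * d →
  ∀ (uL : Fin mL → E d) (uR : Fin mR → E d),
    (∀ i, elen (uL i) = 1 ∧ dotp (uL i) a = 0) →
    (∀ i, elen (uR i) = 1 ∧ dotp (uR i) b = 0) →
    ∀ q : F d,
      |iteratedFDeriv ℝ (mL + nL + (mR + nR)) ζ q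
        (Fin.append
          (Fin.append (fun i => ((uL i, 0) : F d)) (fun _ : Fin nL => ((a, 0) : F d)))
          (Fin.append (fun i => ((0, uR i) : F d)) (fun _ : Fin nR => ((0, b) : F d))))|
      ≤ γ₁ ^ (-(mL : ℤ)) * γ₂ ^ (-(nL : ℤ)) * δ₁ ^ (-(mR : ℤ)) * δ₂ ^ (-(nR : ℤ))

/-- The vector `a_P = (-Φ^{x'z'}(P)Φ_{z'x_d}(P), 1)`. -/
def aP (d : ℕ) [NeZero d] (Φ : F d → ℝ) (P : F d) : E d :=
  padVec d
    (-(Matrix.mulVec ((blkM d Φ P)ᵀ)⁻¹ (fun j => PhiXZ d Φ P (lastIdx d) (castIdx d j)))) 1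

/-- The vector `b_P = (-Φ^{z'x'}(P)Φ_{x'z_d}(P), 1)`. -/
def bP (d : ℕ) [NeZero d] (Φ : F d → ℝ) (P : F d) : E d :=
  padVec d
    (-(Matrix.mulVec (blkM d Φ P)⁻¹ (fun i => PhiXZ d Φ P (castIdx d i) (lastIdx d)))) 1

/-- The quantity `𝒜_P(γ₁,γ₂,δ₁,δ₂)`: the supremum of `‖T_λ[ζ σ_{j,k,l}]‖` over all
normalized cutoff functions `ζ ∈ 𝒵_P^{a_P,b_P}(γ₁,γ₂,δ₁,δ₂)`. -/
def AP (d : ℕ) [NeZero d] (Φ σ : F d → ℝ) (β₀ : ℝ → ℝ) (lam : ℝ) (j k l : ℕ)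
    (γ₁ γ₂ δ₁ δ₂ : ℝ) (P : F d) : ℝ :=
  sSup {r : ℝ | ∃ ζ : F d → ℝ,
    IsNormalizedCutoff d ζ P (aP d Φ P) (bP d Φ P) γ₁ γ₂ δ₁ δ₂ ∧
    r = opNorm d lam Φ (fun p => ζ p * sigJKL d Φ σ β₀ j k l p)}

/-- The quantity `𝒜⁰_P(γ₁,γ₂,δ₁,δ₂)`: as `AP` but with `σ⁰_{j,k,ℓ₀}`. -/
def AP0 (d : ℕ) [NeZero d] (Φ σ : F d → ℝ) (β₀ : ℝ → ℝ) (lam : ℝ) (j k : ℕ)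
    (γ₁ γ₂ δ₁ δ₂ : ℝ) (P : F d) : ℝ :=
  sSup {r : ℝ | ∃ ζ : F d → ℝ,
    IsNormalizedCutoff d ζ P (aP d Φ P) (bP d Φ P) γ₁ γ₂ δ₁ δ₂ ∧
    r = opNorm d lam Φ (fun p => ζ p * sig0 d Φ σ β₀ j k (ell0 lam) p)}

/-- The determinant of the differential of a self-map of a normed space. -/
def detD {G : Type*} [NormedAddCommGroup G] [NormedSpace ℝ G] (f : G → G) (x : G) : ℝ :=
  LinearMap.det ((fderiv ℝ f x : G →L[ℝ] G) : G →ₗ[ℝ] G)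

/-- Iterated directional derivative along a vector field `V`. -/
def VdIter {G : Type*} [NormedAddCommGroup G] [NormedSpace ℝ G]
    (V : G → G) (g : G → ℝ) : ℕ → G → ℝ
  | 0 => g
  | (k + 1) => fun x => fderiv ℝ (VdIter V g k) x (V x)

/-- `V` is a kernel field for `f` on `U`: `Df(V) = det(Df)·(W ∘ f)` on `U` for some
smooth vector field `W` defined near `f(U)`. -/
def IsKernelFieldOn {G : Type*} [NormedAddCommGroup G] [NormedSpace ℝ G]
    (f V : G → G) (U : Set G) : Prop :=
  ∃ (W : G → G) (O : Set G), IsOpen O ∧ f '' U ⊆ O ∧ ContDiffOn ℝ (⊤ : ℕ∞) W O ∧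
    ∀ x ∈ U, fderiv ℝ f x (V x) = detD f x • W (f x)

/-- `f` is of type `≤ k` at `P`: there is a nonvanishing kernel field `V` near `P`
such that `V^j(det Df)(P) ≠ 0` for some `j ≤ k`. -/
def TypeAtMost {G : Type*} [NormedAddCommGroup G] [NormedSpace ℝ G]
    (f : G → G) (k : ℕ) (P : G) : Prop :=
  ∃ U : Set G, IsOpen U ∧ P ∈ U ∧
    ∃ V : G → G, ContDiffOn ℝ (⊤ : ℕ∞) V U ∧ (∀ x ∈ U, V x ≠ 0) ∧
      IsKernelFieldOn f V U ∧ ∃ j ≤ k, VdIter V (detD f) j P ≠ 0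

/-- The projection `π_L(x,z) = (x, ∇_xΦ(x,z))`. -/
def piL (d : ℕ) (Φ : F d → ℝ) (p : F d) : F d :=
  (p.1, fun i => fderiv ℝ Φ p (Pi.single i 1, 0))

/-- The projection `π_R(x,z) = (z, -∇_zΦ(x,z))`. -/
def piR (d : ℕ) (Φ : F d → ℝ) (p : F d) : F d :=
  (p.2, fun i => -(fderiv ℝ Φ p (0, Pi.single i 1)))

/-- The canonical relation `{(x, Φ_x, z, -Φ_z) : (x,z) ∈ S}`. -/
def canRel (d : ℕ) (Φ : F d → ℝ) (S : Set (F d)) : Set ((F d) × (F d)) :=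
  (fun p => (piL d Φ p, piR d Φ p)) '' S

/-- The standard symplectic form on `ℝ^d × ℝ^d`. -/
def symp (d : ℕ) (u v : F d) : ℝ := dotp u.1 v.2 - dotp u.2 v.1

end OIO

namespace OIO

/-- The Jacobian matrix of `f : ℝ^n → ℝ^n`, entry `(i,j) = ∂f_i/∂x_j`. -/
noncomputable def Jac (n : ℕ) (f : (Fin n → ℝ) → (Fin n → ℝ)) (x : Fin n → ℝ) :
    Matrix (Fin n) (Fin n) ℝ :=
  fun i j => fderiv ℝ f x (Pi.single j 1) i

/-- The upper-left `(n-1)×(n-1)` block `A(x)` of the Jacobian. -/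
noncomputable def Ablk (n : ℕ) (f : (Fin n → ℝ) → (Fin n → ℝ)) (x : Fin n → ℝ) :
    Matrix (Fin (n - 1)) (Fin (n - 1)) ℝ :=
  (Jac n f x).submatrix (castIdx n) (castIdx n)

/-- The upper-right column `b(x)` of the Jacobian. -/
noncomputable def bvec (n : ℕ) [NeZero n] (f : (Fin n → ℝ) → (Fin n → ℝ)) (x : Fin n → ℝ) :
    Fin (n - 1) → ℝ :=
  fun i => Jac n f x (castIdx n i) (lastIdx n)

/-- The lower-left row `c(x)ᵗ` of the Jacobian. -/
noncomputable def cvec (n : ℕ) [NeZero n] (f : (Fin n → ℝ) → (Fin n → ℝ)) (x : Fin n → ℝ) :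
    Fin (n - 1) → ℝ :=
  fun j => Jac n f x (lastIdx n) (castIdx n j)

/-- The lower-right entry `d(x)` of the Jacobian. -/
noncomputable def dval (n : ℕ) [NeZero n] (f : (Fin n → ℝ) → (Fin n → ℝ)) (x : Fin n → ℝ) : ℝ :=
  Jac n f x (lastIdx n) (lastIdx n)

/-- The vector field `V(x) = (-A(x)⁻¹ b(x), 1)`, i.e. `V = ∂_{x_n} - ⟨A⁻¹b, ∂_{x'}⟩`. -/
noncomputable def Vfield (n : ℕ) [NeZero n] (f : (Fin n → ℝ) → (Fin n → ℝ)) (x : Fin n → ℝ) :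
    Fin n → ℝ :=
  padVec n (-(Matrix.mulVec (Ablk n f x)⁻¹ (bvec n f x))) 1

end OIO

open MeasureTheory Real Set OIO

section Helpers
open OIO Finset

lemma clm_apply_eq_sum {n : ℕ} (L : (Fin n → ℝ) →L[ℝ] (Fin n → ℝ)) (v : Fin n → ℝ) (i : Fin n) :
    L v i = ∑ j, v j * L (Pi.single j 1) i := by
  conv_lhs => rw [← Finset.univ_sum_single v]
  rw [map_sum, Finset.sum_apply]
  refine Finset.sum_congr rfl fun j _ => ?_
  have h : Pi.single j (v j) = v j • (Pi.single j 1 : Fin n → ℝ) := by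
    rw [← Pi.single_smul, smul_eq_mul, mul_one]
  rw [h, _root_.map_smul]
  simp [smul_eq_mul]

lemma sum_split {n : ℕ} [NeZero n] (g : Fin n → ℝ) :
    ∑ j, g j = (∑ j : Fin (n-1), g (castIdx n j)) + g (lastIdx n) := by
  have h : n - 1 + 1 = n := Nat.succ_pred_eq_of_pos (Nat.pos_of_ne_zero (NeZero.ne n))
  rw [← (finCongr h).sum_comp g, Fin.sum_univ_castSucc]
  have e1 : ∀ j : Fin (n-1), finCongr h j.castSucc = castIdx n j :=
    fun j => Fin.ext (by simp [castIdx])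
  have e2 : finCongr h (Fin.last (n-1)) = lastIdx n := Fin.ext (by simp [lastIdx])
  simp only [e1, e2]

lemma contDiffOn_Jac {n : ℕ} {U : Set (Fin n → ℝ)} (hU : IsOpen U)
    {f : (Fin n → ℝ) → (Fin n → ℝ)} (hf : ContDiffOn ℝ (⊤ : ℕ∞) f U) (i j : Fin n) :
    ContDiffOn ℝ (⊤ : ℕ∞) (fun x => Jac n f x i j) U := by
  have h1 : ContDiffOn ℝ (⊤ : ℕ∞) (fderiv ℝ f) U := hf.fderiv_of_isOpen hU (by simp)
  have h2 : ContDiffOn ℝ (⊤ : ℕ∞) (fun x => fderiv ℝ f x (Pi.single j 1)) U :=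
    h1.clm_apply contDiffOn_const
  exact (ContinuousLinearMap.proj (R := ℝ) (φ := fun _ : Fin n => ℝ) i).contDiff.comp_contDiffOn h2

lemma contDiffOn_finset_prod {n : ℕ} {ι : Type*} {U : Set (Fin n → ℝ)} (s : Finset ι)
    (F : ι → (Fin n → ℝ) → ℝ) (hF : ∀ i ∈ s, ContDiffOn ℝ (⊤ : ℕ∞) (F i) U) :
    ContDiffOn ℝ (⊤ : ℕ∞) (fun x => ∏ i ∈ s, F i x) U := by
  classical
  induction s using Finset.induction with
  | empty => simpa using contDiffOn_const
  | @insert a s ha ih =>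
    simp only [Finset.prod_insert ha]
    exact (hF a (Finset.mem_insert_self a s)).mul (ih fun i hi => hF i (Finset.mem_insert_of_mem hi))

lemma contDiffOn_detM {n m : ℕ} {U : Set (Fin n → ℝ)} (M : (Fin n → ℝ) → Matrix (Fin m) (Fin m) ℝ)
    (hM : ∀ i j, ContDiffOn ℝ (⊤ : ℕ∞) (fun x => M x i j) U) :
    ContDiffOn ℝ (⊤ : ℕ∞) (fun x => (M x).det) U := by
  simp only [Matrix.det_apply, Units.smul_def, zsmul_eq_mul]
  apply ContDiffOn.sum
  intro σ _
  exact contDiffOn_const.mul (contDiffOn_finset_prod Finset.univ (fun i x => M x (σ i) i) (fun i _ => hM _ _))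

lemma contDiffOn_invM {n m : ℕ} {U : Set (Fin n → ℝ)} (M : (Fin n → ℝ) → Matrix (Fin m) (Fin m) ℝ)
    (hM : ∀ i j, ContDiffOn ℝ (⊤ : ℕ∞) (fun x => M x i j) U)
    (hdet : ∀ x ∈ U, (M x).det ≠ 0) (i j : Fin m) :
    ContDiffOn ℝ (⊤ : ℕ∞) (fun x => (M x)⁻¹ i j) U := by
  have hrw : ∀ x, (M x)⁻¹ i j = ((M x).det)⁻¹ * ((M x).updateRow j (Pi.single i 1)).det := by
    intro x
    rw [Matrix.inv_def, Ring.inverse_eq_inv']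
    simp [Matrix.smul_apply, Matrix.adjugate_apply, smul_eq_mul]
  simp only [hrw]
  refine ContDiffOn.mul ((contDiffOn_detM M hM).inv hdet) (contDiffOn_detM _ ?_)
  intro a b
  by_cases hab : a = j
  · subst hab; simp only [Matrix.updateRow_self]; exact contDiffOn_const
  · simp only [Matrix.updateRow_ne hab]; exact hM a b

lemma contDiffOn_VdIter {G : Type*} [NormedAddCommGroup G] [NormedSpace ℝ G]
    {U : Set G} (hU : IsOpen U) {V : G → G} {g : G → ℝ}
    (hV : ContDiffOn ℝ (⊤ : ℕ∞) V U) (hg : ContDiffOn ℝ (⊤ : ℕ∞) g U) :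
    ∀ j, ContDiffOn ℝ (⊤ : ℕ∞) (VdIter V g j) U := by
  intro j
  induction j with
  | zero => exact hg
  | succ j ih => exact (ih.fderiv_of_isOpen hU (by simp)).clm_apply hV

end Helpers
section Part1
open OIO Finset

lemma padVec_lastIdx {n : ℕ} [NeZero n] (v : Fin (n-1) → ℝ) (t : ℝ) :
    padVec n v t (lastIdx n) = t := by
  simp [padVec, lastIdx]

lemma padVec_lt {n : ℕ} (v : Fin (n-1) → ℝ) (t : ℝ) (i : Fin n) (h : (i : ℕ) < n-1) :
    padVec n v t i = v ⟨i.1, h⟩ := dif_pos h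

lemma statement18_part1 {n : ℕ} [NeZero n] (U : Set (Fin n → ℝ)) (hU : IsOpen U)
    (f : (Fin n → ℝ) → (Fin n → ℝ)) (hf : ContDiffOn ℝ (⊤ : ℕ∞) f U)
    (hA : ∀ x ∈ U, IsUnit (Ablk n f x)) :
    ∀ Vt : (Fin n → ℝ) → (Fin n → ℝ), ContDiffOn ℝ (⊤ : ℕ∞) Vt U →
      (∃ (Z : (Fin n → ℝ) → (Fin n → ℝ)) (O : Set (Fin n → ℝ)),
        IsOpen O ∧ f '' U ⊆ O ∧ ContDiffOn ℝ (⊤ : ℕ∞) Z O ∧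
        ∀ x ∈ U, fderiv ℝ f x (Vt x) = (Jac n f x).det • Z (f x)) →
      ∃ (α : (Fin n → ℝ) → ℝ) (Y : (Fin n → ℝ) → (Fin n → ℝ)),
        ContDiffOn ℝ (⊤ : ℕ∞) α U ∧ ContDiffOn ℝ (⊤ : ℕ∞) Y U ∧
        ∀ x ∈ U, Vt x = α x • Vfield n f x + (Jac n f x).det • Y x := by
  rintro Vt hVt ⟨Z, O, hO, hfUO, hZ, hker⟩
  have hdetA : ∀ x ∈ U, (Ablk n f x).det ≠ 0 := fun x hx =>
    ((Matrix.isUnit_iff_isUnit_det _).1 (hA x hx)).ne_zero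
  have hAent : ∀ i j, ContDiffOn ℝ (⊤ : ℕ∞) (fun x => Ablk n f x i j) U := fun i j =>
    contDiffOn_Jac hU hf (castIdx n i) (castIdx n j)
  have hZf : ContDiffOn ℝ (⊤ : ℕ∞) (fun x => Z (f x)) U :=
    hZ.comp hf (fun x hx => hfUO ⟨x, hx, rfl⟩)
  refine ⟨fun x => Vt x (lastIdx n),
    fun x => padVec n (Matrix.mulVec (Ablk n f x)⁻¹ (fun i => Z (f x) (castIdx n i))) 0,
    ?_, ?_, ?_⟩
  · exact (ContinuousLinearMap.proj (R := ℝ) (φ := fun _ : Fin n => ℝ)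
      (lastIdx n)).contDiff.comp_contDiffOn hVt
  · rw [contDiffOn_pi]
    intro i
    by_cases h : (i : ℕ) < n - 1
    · simp only [padVec_lt _ _ i h, Matrix.mulVec, dotProduct]
      apply ContDiffOn.sum
      intro j _
      exact (contDiffOn_invM _ hAent hdetA _ _).mul
        ((ContinuousLinearMap.proj (R := ℝ) (φ := fun _ : Fin n => ℝ)
          (castIdx n j)).contDiff.comp_contDiffOn hZf)
    · have : ∀ x : Fin n → ℝ, padVec n (Matrix.mulVec (Ablk n f x)⁻¹
          (fun i => Z (f x) (castIdx n i))) 0 i = 0 := fun x => dif_neg h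
      simp only [this]
      exact contDiffOn_const
  · intro x hx
    funext i
    have hcomp : ∀ i0 : Fin n, ∑ j, Vt x j * Jac n f x i0 j = (Jac n f x).det * Z (f x) i0 := by
      intro i0
      have h1 := congrFun (hker x hx) i0
      rw [clm_apply_eq_sum] at h1
      simpa [Jac] using h1
    set A := Ablk n f x with hAdef
    have hUnit : IsUnit A.det := (Matrix.isUnit_iff_isUnit_det _).1 (hA x hx)
    set w : Fin (n-1) → ℝ := fun j => Vt x (castIdx n j) with hw
    set z : Fin (n-1) → ℝ := fun j => Z (f x) (castIdx n j) with hz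
    set dd : ℝ := (Jac n f x).det with hd
    set a : ℝ := Vt x (lastIdx n) with ha
    have key : A.mulVec w = dd • z - a • (bvec n f x) := by
      funext i0
      have h2 := hcomp (castIdx n i0)
      rw [sum_split] at h2
      have e1 : ∑ j, A i0 j * w j
          = ∑ j : Fin (n-1), Vt x (castIdx n j) * Jac n f x (castIdx n i0) (castIdx n j) :=
        Finset.sum_congr rfl fun j _ => mul_comm _ _
      simp only [Matrix.mulVec, dotProduct, Pi.sub_apply, Pi.smul_apply, smul_eq_mul]
      rw [e1]
      have hb : Jac n f x (castIdx n i0) (lastIdx n) = bvec n f x i0 := rfl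
      rw [hb] at h2
      linarith [h2]
    have hw2 : w = dd • (A⁻¹.mulVec z) - a • (A⁻¹.mulVec (bvec n f x)) := by
      have h3 : A⁻¹.mulVec (A.mulVec w) = w := by
        rw [Matrix.mulVec_mulVec, Matrix.nonsing_inv_mul _ hUnit, Matrix.one_mulVec]
      rw [← h3, key, Matrix.mulVec_sub, Matrix.mulVec_smul, Matrix.mulVec_smul]
    by_cases hi : (i : ℕ) < n - 1
    · have h4 := congrFun hw2 ⟨i.1, hi⟩
      have hieq : castIdx n ⟨i.1, hi⟩ = i := Fin.ext rfl
      simp only [hw, hieq, Pi.sub_apply, Pi.smul_apply, smul_eq_mul] at h4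
      simp only [Pi.add_apply, Pi.smul_apply, smul_eq_mul, Vfield,
        padVec_lt _ _ i hi, Pi.neg_apply]
      rw [h4]; ring
    · have hieq : i = lastIdx n := Fin.ext (by
        have := i.2
        simp only [lastIdx]
        omega)
      rw [hieq]
      simp only [Pi.add_apply, Pi.smul_apply, smul_eq_mul, Vfield, padVec_lastIdx]
      ring
end Part1
section Coeff
open OIO Finset

lemma coeff_lemma {G : Type*} [NormedAddCommGroup G] [NormedSpace ℝ G]
    {U : Set G} (hU : IsOpen U) (V₁ V₂ Y : G → G) (β h : G → ℝ)
    (hV₁ : ContDiffOn ℝ (⊤ : ℕ∞) V₁ U) (hβ : ContDiffOn ℝ (⊤ : ℕ∞) β U) (hY : ContDiffOn ℝ (⊤ : ℕ∞) Y U)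
    (hh : ContDiffOn ℝ (⊤ : ℕ∞) h U)
    (hrel : ∀ x ∈ U, V₂ x = β x • V₁ x + h x • Y x) (j : ℕ) :
    ∃ c : ℕ → G → ℝ, (∀ i, ContDiffOn ℝ (⊤ : ℕ∞) (c i) U) ∧
      (∀ x ∈ U, VdIter V₂ h j x = ∑ i ∈ Finset.range (j+1), c i x * VdIter V₁ h i x) ∧
      (∀ x ∈ U, c j x = β x ^ j) := by
  have hV₂ : ContDiffOn ℝ (⊤ : ℕ∞) V₂ U := ((hβ.smul hV₁).add (hh.smul hY)).congr hrel
  have hg : ∀ i, ContDiffOn ℝ (⊤ : ℕ∞) (VdIter V₁ h i) U := contDiffOn_VdIter hU hV₁ hh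
  induction j with
  | zero =>
    exact ⟨fun _ _ => 1, fun i => contDiffOn_const,
      fun x hx => by simp [VdIter], fun x hx => by simp⟩
  | succ j ih =>
    obtain ⟨c, hc, hsum, htop⟩ := ih
    set g : ℕ → G → ℝ := VdIter V₁ h with hgdef
    refine ⟨fun i x =>
        (if i ≤ j then fderiv ℝ (c i) x (V₂ x) else 0)
        + (if 1 ≤ i then c (i-1) x * β x else 0)
        + (if i = 0 then ∑ m ∈ Finset.range (j+1), c m x * fderiv ℝ (g m) x (Y x) else 0),
      ?_, ?_, ?_⟩
    · intro i
      apply ContDiffOn.add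
      apply ContDiffOn.add
      · by_cases h1 : i ≤ j
        · simp only [if_pos h1]
          exact ((hc i).fderiv_of_isOpen hU (by simp)).clm_apply hV₂
        · simp only [if_neg h1]; exact contDiffOn_const
      · by_cases h2 : 1 ≤ i
        · simp only [if_pos h2]; exact (hc (i-1)).mul hβ
        · simp only [if_neg h2]; exact contDiffOn_const
      · by_cases h3 : i = 0
        · simp only [if_pos h3]
          exact ContDiffOn.sum fun m _ =>
            (hc m).mul (((hg m).fderiv_of_isOpen hU (by simp)).clm_apply hY)
        · simp only [if_neg h3]; exact contDiffOn_const
    · intro x hx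
      have hmem : U ∈ nhds x := hU.mem_nhds hx
      have hEq : (fun y => ∑ i ∈ Finset.range (j+1), c i y * g i y) =ᶠ[nhds x] VdIter V₂ h j := by
        filter_upwards [hmem] with y hy
        exact (hsum y hy).symm
      have dc : ∀ i, DifferentiableAt ℝ (c i) x :=
        fun i => ((hc i).differentiableOn (by simp)).differentiableAt hmem
      have dg : ∀ i, DifferentiableAt ℝ (g i) x :=
        fun i => ((hg i).differentiableOn (by simp)).differentiableAt hmem
      have hder : HasFDerivAt (fun y => ∑ i ∈ Finset.range (j+1), c i y * g i y)
          (∑ i ∈ Finset.range (j+1),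
            (c i x • fderiv ℝ (g i) x + g i x • fderiv ℝ (c i) x)) x := by
        apply HasFDerivAt.fun_sum
        intro i _
        exact ((dc i).hasFDerivAt.mul (dg i).hasFDerivAt)
      have hstep : VdIter V₂ h (j+1) x
          = ∑ i ∈ Finset.range (j+1),
              (c i x * (fderiv ℝ (g i) x (V₂ x)) + g i x * (fderiv ℝ (c i) x (V₂ x))) := by
        show fderiv ℝ (VdIter V₂ h j) x (V₂ x) = _
        rw [← hEq.fderiv_eq, hder.fderiv]
        simp [ContinuousLinearMap.sum_apply, smul_eq_mul]
      have hexp : ∀ i, fderiv ℝ (g i) x (V₂ x)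
          = β x * g (i+1) x + g 0 x * (fderiv ℝ (g i) x (Y x)) := by
        intro i
        rw [hrel x hx, map_add, (fderiv ℝ (g i) x).map_smul, (fderiv ℝ (g i) x).map_smul]
        have h5 : fderiv ℝ (g i) x (V₁ x) = g (i+1) x := rfl
        have h6 : h x = g 0 x := rfl
        rw [h5, smul_eq_mul, smul_eq_mul, h6]
      rw [hstep]
      simp only [hexp]
      have hA : ∑ i ∈ Finset.range (j+2),
            (if i ≤ j then fderiv ℝ (c i) x (V₂ x) else 0) * g i x
          = ∑ i ∈ Finset.range (j+1), fderiv ℝ (c i) x (V₂ x) * g i x := by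
        rw [Finset.sum_range_succ, if_neg (by omega : ¬ j+1 ≤ j), zero_mul, add_zero]
        exact Finset.sum_congr rfl fun i hi => by
          rw [if_pos (Nat.lt_succ_iff.mp (Finset.mem_range.mp hi))]
      have hB : ∑ i ∈ Finset.range (j+2), (if 1 ≤ i then c (i-1) x * β x else 0) * g i x
          = ∑ i ∈ Finset.range (j+1), (c i x * β x) * g (i+1) x := by
        rw [Finset.sum_range_succ', if_neg (by omega : ¬ (1:ℕ) ≤ 0), zero_mul, add_zero]
        exact Finset.sum_congr rfl fun i hi => by
          rw [if_pos (by omega : 1 ≤ i+1)]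
          simp
      have hC : ∑ i ∈ Finset.range (j+2),
            (if i = 0 then ∑ m ∈ Finset.range (j+1), c m x * fderiv ℝ (g m) x (Y x) else 0) * g i x
          = ∑ m ∈ Finset.range (j+1), (c m x * fderiv ℝ (g m) x (Y x)) * g 0 x := by
        rw [Finset.sum_range_succ']
        have hz : ∀ i ∈ Finset.range (j+1),
            (if i+1 = 0 then (∑ m ∈ Finset.range (j+1), c m x * fderiv ℝ (g m) x (Y x)) else 0)
              * g (i+1) x = 0 :=
          fun i _ => by rw [if_neg (Nat.succ_ne_zero i), zero_mul]
        rw [Finset.sum_congr rfl hz, Finset.sum_const_zero, zero_add, if_pos rfl, Finset.sum_mul]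
      have hcomb : ∀ i, c i x * (β x * g (i+1) x + g 0 x * fderiv ℝ (g i) x (Y x)) + g i x * fderiv ℝ (c i) x (V₂ x)
          = fderiv ℝ (c i) x (V₂ x) * g i x
            + ((c i x * β x) * g (i+1) x + (c i x * fderiv ℝ (g i) x (Y x)) * g 0 x) := fun i => by ring
      rw [Finset.sum_congr rfl (fun i _ => hcomb i), Finset.sum_add_distrib]
      conv_lhs => rw [Finset.sum_add_distrib]
      simp only [add_mul, Finset.sum_add_distrib]
      rw [hA, hB, hC]
      ring
    · intro x hx
      simp only [if_neg (by omega : ¬ j+1 ≤ j), if_pos (by omega : 1 ≤ j+1),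
        if_neg (by omega : ¬ j+1 = 0), Nat.add_sub_cancel]
      rw [htop x hx, pow_succ]
      ring

end Coeff
section Final
open OIO Finset

lemma onedir {n : ℕ} [NeZero n] (U : Set (Fin n → ℝ)) (hU : IsOpen U)
    (f : (Fin n → ℝ) → (Fin n → ℝ)) (hf : ContDiffOn ℝ (⊤ : ℕ∞) f U)
    (hA : ∀ x ∈ U, IsUnit (Ablk n f x))
    (V₁ V₂ : (Fin n → ℝ) → (Fin n → ℝ))
    (hV₁ : ContDiffOn ℝ (⊤ : ℕ∞) V₁ U) (hV₂ : ContDiffOn ℝ (⊤ : ℕ∞) V₂ U)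
    (hnz₁ : ∀ x ∈ U, V₁ x ≠ 0) (hnz₂ : ∀ x ∈ U, V₂ x ≠ 0)
    (hk₁ : ∃ (Z : (Fin n → ℝ) → (Fin n → ℝ)) (O : Set (Fin n → ℝ)),
        IsOpen O ∧ f '' U ⊆ O ∧ ContDiffOn ℝ (⊤ : ℕ∞) Z O ∧
        ∀ x ∈ U, fderiv ℝ f x (V₁ x) = (Jac n f x).det • Z (f x))
    (hk₂ : ∃ (Z : (Fin n → ℝ) → (Fin n → ℝ)) (O : Set (Fin n → ℝ)),
        IsOpen O ∧ f '' U ⊆ O ∧ ContDiffOn ℝ (⊤ : ℕ∞) Z O ∧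
        ∀ x ∈ U, fderiv ℝ f x (V₂ x) = (Jac n f x).det • Z (f x))
    (P : Fin n → ℝ) (hP : P ∈ U) (k : ℕ)
    (H : (∀ j < k, VdIter V₁ (fun x => (Jac n f x).det) j P = 0) ∧
        VdIter V₁ (fun x => (Jac n f x).det) k P ≠ 0) :
    (∀ j < k, VdIter V₂ (fun x => (Jac n f x).det) j P = 0) ∧
        VdIter V₂ (fun x => (Jac n f x).det) k P ≠ 0 := by
  obtain ⟨hzero, hknz⟩ := H
  set hdetf : (Fin n → ℝ) → ℝ := fun x => (Jac n f x).det with hdd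
  rcases Nat.eq_zero_or_pos k with hk0 | hkpos
  · subst hk0
    exact ⟨fun j hj => absurd hj (Nat.not_lt_zero j), hknz⟩
  obtain ⟨α₁, Y₁, hα₁, hY₁, heq₁⟩ := statement18_part1 U hU f hf hA V₁ hV₁ hk₁
  obtain ⟨α₂, Y₂, hα₂, hY₂, heq₂⟩ := statement18_part1 U hU f hf hA V₂ hV₂ hk₂
  have hh : ContDiffOn ℝ (⊤ : ℕ∞) hdetf U := contDiffOn_detM _ (fun i j => contDiffOn_Jac hU hf i j)
  have hP0 : hdetf P = 0 := hzero 0 hkpos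
  have hα₁P : α₁ P ≠ 0 := by
    intro h0
    apply hnz₁ P hP
    have h1 := heq₁ P hP
    rw [show (Jac n f P).det = hdetf P from rfl, hP0, h0] at h1
    simpa using h1
  have hα₂P : α₂ P ≠ 0 := by
    intro h0
    apply hnz₂ P hP
    have h1 := heq₂ P hP
    rw [show (Jac n f P).det = hdetf P from rfl, hP0, h0] at h1
    simpa using h1
  set U' : Set (Fin n → ℝ) := {x | x ∈ U ∧ α₁ x ≠ 0} with hU'def
  have hU' : IsOpen U' := by
    rw [isOpen_iff_mem_nhds]
    rintro x ⟨hxU, hx1⟩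
    have hc1 : ContinuousAt α₁ x := hα₁.continuousOn.continuousAt (hU.mem_nhds hxU)
    filter_upwards [hU.mem_nhds hxU, hc1.eventually_ne hx1] with y hy1 hy2
    exact ⟨hy1, hy2⟩
  have hPU' : P ∈ U' := ⟨hP, hα₁P⟩
  have hsub : U' ⊆ U := fun x hx => hx.1
  set β : (Fin n → ℝ) → ℝ := fun x => α₂ x / α₁ x with hβdef
  set Yc : (Fin n → ℝ) → (Fin n → ℝ) := fun x => Y₂ x - β x • Y₁ x with hYcdef
  have hrel : ∀ x ∈ U', V₂ x = β x • V₁ x + hdetf x • Yc x := by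
    rintro x ⟨hxU, hx1⟩
    rw [heq₂ x hxU, heq₁ x hxU]
    have hba : β x * α₁ x = α₂ x := div_mul_cancel₀ _ hx1
    show α₂ x • Vfield n f x + hdetf x • Y₂ x
      = β x • (α₁ x • Vfield n f x + hdetf x • Y₁ x) + hdetf x • (Y₂ x - β x • Y₁ x)
    rw [← hba]
    module
  have hβsm : ContDiffOn ℝ (⊤ : ℕ∞) β U' :=
    ContDiffOn.div (hα₂.mono hsub) (hα₁.mono hsub) (fun x hx => hx.2)
  have hYc : ContDiffOn ℝ (⊤ : ℕ∞) Yc U' := (hY₂.mono hsub).sub (hβsm.smul (hY₁.mono hsub))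
  have hβP : β P ≠ 0 := div_ne_zero hα₂P hα₁P
  have hzero₂ : ∀ j < k, VdIter V₂ hdetf j P = 0 := by
    intro j hj
    obtain ⟨c, hc, hcsum, hctop⟩ := coeff_lemma hU' V₁ V₂ Yc β hdetf
      (hV₁.mono hsub) hβsm hYc (hh.mono hsub) hrel j
    rw [hcsum P hPU']
    apply Finset.sum_eq_zero
    intro i hi
    have hik : i < k := by
      have := Finset.mem_range.mp hi
      omega
    rw [hzero i hik, mul_zero]
  refine ⟨hzero₂, ?_⟩
  obtain ⟨c, hc, hcsum, hctop⟩ := coeff_lemma hU' V₁ V₂ Yc β hdetf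
    (hV₁.mono hsub) hβsm hYc (hh.mono hsub) hrel k
  rw [hcsum P hPU', Finset.sum_range_succ, hctop P hPU']
  have hrest : ∑ i ∈ Finset.range k, c i P * VdIter V₁ hdetf i P = 0 :=
    Finset.sum_eq_zero fun i hi => by rw [hzero i (Finset.mem_range.mp hi), mul_zero]
  rw [hrest, zero_add]
  exact mul_ne_zero (pow_ne_zero _ hβP) hknz

end Final
/-- Any kernel field `Ṽ` for `f` can be written as `Ṽ = α·V + det(Df)·Y`
with `α`, `Y` smooth; consequently the conditions defining the type of `f` do not depend on
the choice of nonvanishing kernel field. -/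
theorem statement18 (n : ℕ) [NeZero n] (hn : 2 ≤ n)
    (U : Set (Fin n → ℝ)) (hU : IsOpen U)
    (f : (Fin n → ℝ) → (Fin n → ℝ)) (hf : ContDiffOn ℝ (⊤ : ℕ∞) f U)
    (hA : ∀ x ∈ U, IsUnit (Ablk n f x)) :
    (∀ Vt : (Fin n → ℝ) → (Fin n → ℝ), ContDiffOn ℝ (⊤ : ℕ∞) Vt U →
      (∃ (Z : (Fin n → ℝ) → (Fin n → ℝ)) (O : Set (Fin n → ℝ)),
        IsOpen O ∧ f '' U ⊆ O ∧ ContDiffOn ℝ (⊤ : ℕ∞) Z O ∧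
        ∀ x ∈ U, fderiv ℝ f x (Vt x) = (Jac n f x).det • Z (f x)) →
      ∃ (α : (Fin n → ℝ) → ℝ) (Y : (Fin n → ℝ) → (Fin n → ℝ)),
        ContDiffOn ℝ (⊤ : ℕ∞) α U ∧ ContDiffOn ℝ (⊤ : ℕ∞) Y U ∧
        ∀ x ∈ U, Vt x = α x • Vfield n f x + (Jac n f x).det • Y x) ∧
    -- consequence: the "type ≤ k" conditions are independent of the chosen
    -- nonvanishing kernel field
    (∀ V₁ V₂ : (Fin n → ℝ) → (Fin n → ℝ),
      ContDiffOn ℝ (⊤ : ℕ∞) V₁ U → ContDiffOn ℝ (⊤ : ℕ∞) V₂ U →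
      (∀ x ∈ U, V₁ x ≠ 0) → (∀ x ∈ U, V₂ x ≠ 0) →
      (∃ (Z : (Fin n → ℝ) → (Fin n → ℝ)) (O : Set (Fin n → ℝ)),
        IsOpen O ∧ f '' U ⊆ O ∧ ContDiffOn ℝ (⊤ : ℕ∞) Z O ∧
        ∀ x ∈ U, fderiv ℝ f x (V₁ x) = (Jac n f x).det • Z (f x)) →
      (∃ (Z : (Fin n → ℝ) → (Fin n → ℝ)) (O : Set (Fin n → ℝ)),
        IsOpen O ∧ f '' U ⊆ O ∧ ContDiffOn ℝ (⊤ : ℕ∞) Z O ∧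
        ∀ x ∈ U, fderiv ℝ f x (V₂ x) = (Jac n f x).det • Z (f x)) →
      ∀ P ∈ U, ∀ k : ℕ,
        (((∀ j < k, VdIter V₁ (fun x => (Jac n f x).det) j P = 0) ∧
            VdIter V₁ (fun x => (Jac n f x).det) k P ≠ 0)
          ↔ ((∀ j < k, VdIter V₂ (fun x => (Jac n f x).det) j P = 0) ∧
            VdIter V₂ (fun x => (Jac n f x).det) k P ≠ 0))) := by
  refine ⟨statement18_part1 U hU f hf hA, ?_⟩
  intro V₁ V₂ h1 h2 h3 h4 hk1 hk2 P hP k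
  exact ⟨fun H => onedir U hU f hf hA V₁ V₂ h1 h2 h3 h4 hk1 hk2 P hP k H,
    fun H => onedir U hU f hf hA V₂ V₁ h2 h1 h4 h3 hk2 hk1 P hP k H⟩
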